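/- arXiv:0905.3227 — 3 statements merged into one kernel-verified Lean document; each statement's English description precedes it below -/
import Mathlib

section
/- Define g : ℂ × ℂ → ℂ × ℂ by g(z₁, z₂) = ((−conj z₂)/r², (conj z₁)/r²) where r² = ‖z₁‖² + ‖z₂‖² (i.e. r² = z₁ · conj z₁ + z₂ · conj z₂). Then for every (z₁, z₂) ≠ (0,0) and every direction w = (w₁, w₂) ∈ ℂ × ℂ, the antiholomorphic part of the real Fréchet derivative of g satisfies: (1/2) • (fderiv ℝ g z w + Complex.I • fderiv ℝ g z (Complex.I • w)) = ((conj z₂ · conj w₁ − conj z₁ · conj w₂)/r⁴) • (z₁, z₂). -/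
open ComplexConjugate

/-- `g = (1/r²)(-z̄₂, z̄₁)`, the orthogonal complement of the section `(z₁, z₂)`
of the trivial bundle on `ℂ²`. -/
noncomputable def gSerre (p : ℂ × ℂ) : ℂ × ℂ :=
  ((-(conj p.2)) / ((‖p.1‖ ^ 2 + ‖p.2‖ ^ 2 : ℝ) : ℂ),
    (conj p.1) / ((‖p.1‖ ^ 2 + ‖p.2‖ ^ 2 : ℝ) : ℂ))

/-- The key local computation of the analytic Serre construction:
`∂̄ g = (1/r⁴)(z̄₂ dz̄₁ - z̄₁ dz̄₂) ⊗ (z₁, z₂)` away from the origin, where the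
antiholomorphic part of the real Fréchet derivative in direction `w` is
`(1/2)(Dg(w) + i Dg(iw))`. -/
theorem dbar_gSerre (z : ℂ × ℂ) (hz : z ≠ 0) (w : ℂ × ℂ) :
    (1 / 2 : ℂ) • (fderiv ℝ gSerre z w + Complex.I • fderiv ℝ gSerre z (Complex.I • w)) =
      ((conj z.2 * conj w.1 - conj z.1 * conj w.2) /
          (((‖z.1‖ ^ 2 + ‖z.2‖ ^ 2) ^ 2 : ℝ) : ℂ)) • z := by
  set Q : ℂ × ℂ → ℂ := fun p => conj p.1 * p.1 + conj p.2 * p.2 with hQdef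
  have hQeq : ∀ p : ℂ × ℂ, ((‖p.1‖ ^ 2 + ‖p.2‖ ^ 2 : ℝ) : ℂ) = Q p := by
    intro p
    simp only [hQdef, Complex.conj_mul']
    push_cast
    ring
  have hgeq : gSerre = fun p : ℂ × ℂ => (-conj p.2 * (Q p)⁻¹, conj p.1 * (Q p)⁻¹) := by
    funext p
    simp only [gSerre, hQeq, div_eq_mul_inv, neg_mul]
  have hQz : Q z ≠ 0 := by
    rw [← hQeq]
    have : (0:ℝ) < ‖z.1‖ ^ 2 + ‖z.2‖ ^ 2 := by
      by_contra hc
      push_neg at hc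
      have h1 : ‖z.1‖ = 0 := by nlinarith [norm_nonneg z.1, norm_nonneg z.2, sq_nonneg ‖z.1‖, sq_nonneg ‖z.2‖]
      have h2 : ‖z.2‖ = 0 := by nlinarith [norm_nonneg z.1, norm_nonneg z.2, sq_nonneg ‖z.1‖, sq_nonneg ‖z.2‖]
      exact hz (Prod.ext (norm_eq_zero.mp h1) (norm_eq_zero.mp h2))
    exact_mod_cast ne_of_gt (by exact_mod_cast this : (0:ℝ) < _)
  have hfst : HasFDerivAt (fun p : ℂ × ℂ => p.1) (ContinuousLinearMap.fst ℝ ℂ ℂ) z :=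
    hasFDerivAt_fst
  have hsnd : HasFDerivAt (fun p : ℂ × ℂ => p.2) (ContinuousLinearMap.snd ℝ ℂ ℂ) z :=
    hasFDerivAt_snd
  have hconj1 : HasFDerivAt (fun p : ℂ × ℂ => conj p.1)
      ((Complex.conjCLE : ℂ →L[ℝ] ℂ).comp (ContinuousLinearMap.fst ℝ ℂ ℂ)) z :=
    ((Complex.conjCLE : ℂ →L[ℝ] ℂ).hasFDerivAt).comp z hfst
  have hconj2 : HasFDerivAt (fun p : ℂ × ℂ => conj p.2)
      ((Complex.conjCLE : ℂ →L[ℝ] ℂ).comp (ContinuousLinearMap.snd ℝ ℂ ℂ)) z :=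
    ((Complex.conjCLE : ℂ →L[ℝ] ℂ).hasFDerivAt).comp z hsnd
  have hQ : HasFDerivAt Q _ z := (hconj1.mul hfst).add (hconj2.mul hsnd)
  have hQinv : HasFDerivAt (fun p : ℂ × ℂ => (Q p)⁻¹) _ z :=
    (hasFDerivAt_inv' hQz).comp z hQ
  have hg1 : HasFDerivAt (fun p : ℂ × ℂ => -conj p.2 * (Q p)⁻¹) _ z := hconj2.neg.mul hQinv
  have hg2 : HasFDerivAt (fun p : ℂ × ℂ => conj p.1 * (Q p)⁻¹) _ z := hconj1.mul hQinv
  have hg : HasFDerivAt gSerre _ z := hgeq ▸ HasFDerivAt.prodMk hg1 hg2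
  rw [hg.fderiv]
  simp only [ContinuousLinearMap.prod_apply, ContinuousLinearMap.add_apply,
    ContinuousLinearMap.smul_apply, ContinuousLinearMap.comp_apply,
    ContinuousLinearMap.coe_fst', ContinuousLinearMap.coe_snd',
    ContinuousLinearMap.neg_apply, ContinuousLinearMap.mulLeftRight_apply,
    ContinuousLinearEquiv.coe_coe, Complex.conjCLE_apply,
    Prod.smul_mk, Prod.smul_fst, Prod.smul_snd, Prod.mk_add_mk, smul_eq_mul,
    map_mul, Complex.conj_I, map_neg, hQeq, Pi.neg_apply]
  rw [Prod.ext_iff]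
  constructor <;> simp only [Prod.smul_fst, Prod.smul_snd, Prod.fst, Prod.snd, smul_eq_mul] <;>
  · push_cast [hQeq]
    field_simp
    ring_nf
    simp only [Complex.I_sq]
    ring
end

section
/- Define h₁, h₂ : ℂ × ℂ → ℂ by h₁(z₁,z₂) = conj z₁ / r⁴ and h₂(z₁,z₂) = conj z₂ / r⁴, where r² = ‖z₁‖² + ‖z₂‖². Then for every z = (z₁, z₂) ≠ (0,0): (1/2)(fderiv ℝ h₁ z e₁ + Complex.I • fderiv ℝ h₁ z (Complex.I • e₁)) + (1/2)(fderiv ℝ h₂ z e₂ + Complex.I • fderiv ℝ h₂ z (Complex.I • e₂)) = 0, where e₁ = (1,0) and e₂ = (0,1) in ℂ × ℂ. -/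
set_option maxHeartbeats 2000000
open ContinuousLinearMap


open ComplexConjugate

/-- `h₁ = z̄₁/r⁴` on `ℂ²`. -/
noncomputable def hSerre1 (p : ℂ × ℂ) : ℂ :=
  (conj p.1) / (((‖p.1‖ ^ 2 + ‖p.2‖ ^ 2) ^ 2 : ℝ) : ℂ)

/-- `h₂ = z̄₂/r⁴` on `ℂ²`. -/
noncomputable def hSerre2 (p : ℂ × ℂ) : ℂ :=
  (conj p.2) / (((‖p.1‖ ^ 2 + ‖p.2‖ ^ 2) ^ 2 : ℝ) : ℂ)

/-- The identity `∂(z̄₁/r⁴)/∂z̄₁ + ∂(z̄₂/r⁴)/∂z̄₂ = 0` on `ℂ² ∖ {0}`, expressing that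
the singular `(2,1)`-form of the analytic Serre construction is `∂̄`-closed away from
the origin.  The Wirtinger derivative `∂h/∂z̄_j` is encoded as
`(1/2)(Dh(e_j) + i Dh(i e_j))` with `Dh = fderiv ℝ h`. -/
theorem dbar_closed_away_from_origin (z : ℂ × ℂ) (hz : z ≠ 0) :
    (1 / 2 : ℂ) * (fderiv ℝ hSerre1 z ((1 : ℂ), (0 : ℂ))
        + Complex.I * fderiv ℝ hSerre1 z (Complex.I • ((1 : ℂ), (0 : ℂ))))
      + (1 / 2 : ℂ) * (fderiv ℝ hSerre2 z ((0 : ℂ), (1 : ℂ))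
        + Complex.I * fderiv ℝ hSerre2 z (Complex.I • ((0 : ℂ), (1 : ℂ)))) = 0 := by
  set N : (ℂ × ℂ) → ℝ := fun p => ‖p.1‖ ^ 2 + ‖p.2‖ ^ 2 with hNdef
  have hN0 : 0 < N z := by
    rcases eq_or_ne z.1 0 with h1 | h1
    · have h2 : z.2 ≠ 0 := fun h2 => hz (Prod.ext h1 h2)
      have := norm_pos_iff.mpr h2
      have := norm_nonneg z.1
      simp only [hNdef]; nlinarith
    · have := norm_pos_iff.mpr h1
      have := norm_nonneg z.2
      simp only [hNdef]; nlinarith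
  have hN : HasFDerivAt N
      ((2 • (innerSL ℝ z.1).comp (fst ℝ ℂ ℂ)) + (2 • (innerSL ℝ z.2).comp (snd ℝ ℂ ℂ))) z :=
    (hasFDerivAt_fst.norm_sq).add (hasFDerivAt_snd.norm_sq)
  set L := (2 • (innerSL ℝ z.1).comp (fst ℝ ℂ ℂ)) + (2 • (innerSL ℝ z.2).comp (snd ℝ ℂ ℂ)) with hL
  have hM : HasFDerivAt (fun p => (N p) ^ 2) ((N z • L) + (N z • L)) z := by
    have h := hN.mul hN; simp only [pow_two]; exact h
  have hC : HasFDerivAt (fun p => ((N p ^ 2 : ℝ) : ℂ))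
      (Complex.ofRealCLM.comp ((N z • L) + (N z • L))) z :=
    Complex.ofRealCLM.hasFDerivAt.comp z hM
  have hIC : ((N z ^ 2 : ℝ) : ℂ) ≠ 0 := by
    simpa using pow_ne_zero 2 hN0.ne'
  have hInv : HasFDerivAt (fun p => (((N p ^ 2 : ℝ) : ℂ))⁻¹)
      ((-mulLeftRight ℝ ℂ (((N z ^ 2 : ℝ) : ℂ))⁻¹ (((N z ^ 2 : ℝ) : ℂ))⁻¹).comp
        (Complex.ofRealCLM.comp ((N z • L) + (N z • L)))) z :=
    (hasFDerivAt_inv' hIC).comp z hC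
  have hconj1 : HasFDerivAt (fun p : ℂ × ℂ => conj p.1)
      ((Complex.conjCLE.toContinuousLinearMap).comp (fst ℝ ℂ ℂ)) z :=
    ((Complex.conjCLE.toContinuousLinearMap).hasFDerivAt).comp z hasFDerivAt_fst
  have hconj2 : HasFDerivAt (fun p : ℂ × ℂ => conj p.2)
      ((Complex.conjCLE.toContinuousLinearMap).comp (snd ℝ ℂ ℂ)) z :=
    ((Complex.conjCLE.toContinuousLinearMap).hasFDerivAt).comp z hasFDerivAt_snd
  have hfun1 : hSerre1 = fun p => conj p.1 * ((((N p) ^ 2 : ℝ) : ℂ))⁻¹ := by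
    funext p; simp [hSerre1, div_eq_mul_inv, hNdef]
  have hfun2 : hSerre2 = fun p => conj p.2 * ((((N p) ^ 2 : ℝ) : ℂ))⁻¹ := by
    funext p; simp [hSerre2, div_eq_mul_inv, hNdef]
  have h1 := (hfun1 ▸ (@id (HasFDerivAt (fun p : ℂ × ℂ => conj p.1 * (((N p ^ 2 : ℝ) : ℂ))⁻¹) _ z) (hconj1.mul hInv))).fderiv
  have h2 := (hfun2 ▸ (@id (HasFDerivAt (fun p : ℂ × ℂ => conj p.2 * (((N p ^ 2 : ℝ) : ℂ))⁻¹) _ z) (hconj2.mul hInv))).fderiv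
  rw [h1, h2]
  simp only [ContinuousLinearMap.add_apply, ContinuousLinearMap.smul_apply,
    ContinuousLinearMap.comp_apply, ContinuousLinearMap.neg_apply,
    ContinuousLinearMap.mulLeftRight_apply, innerSL_apply_apply, ContinuousLinearMap.coe_fst',
    ContinuousLinearMap.coe_snd', Complex.ofRealCLM_apply, ContinuousLinearEquiv.coe_coe,
    Complex.conjCLE_apply, Prod.smul_fst, Prod.smul_snd, smul_eq_mul]
  simp only [hL, ContinuousLinearMap.add_apply, ContinuousLinearMap.smul_apply,
    ContinuousLinearMap.comp_apply, innerSL_apply_apply, ContinuousLinearMap.coe_fst',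
    ContinuousLinearMap.coe_snd', RCLike.inner_apply, Prod.smul_fst, Prod.smul_snd,
    smul_eq_mul, map_one, hNdef, Complex.inner, mul_one, mul_zero, map_zero]
  have e1 : (‖z.1‖ : ℝ)^2 = z.1.re^2 + z.1.im^2 := by
    rw [Complex.sq_norm, Complex.normSq_apply]; ring
  have e2 : (‖z.2‖ : ℝ)^2 = z.2.re^2 + z.2.im^2 := by
    rw [Complex.sq_norm, Complex.normSq_apply]; ring
  rw [e1, e2]
  have hden : (z.1.re^2 + z.1.im^2 + (z.2.re^2 + z.2.im^2)) ≠ 0 := by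
    have h := hN0
    simp only [hNdef] at h
    rw [e1, e2] at h
    linarith
  have hc1 : (starRingEnd ℂ) z.1 = (z.1.re : ℂ) - (z.1.im : ℂ) * Complex.I := by
    simp [Complex.ext_iff]
  have hc2 : (starRingEnd ℂ) z.2 = (z.2.re : ℂ) - (z.2.im : ℂ) * Complex.I := by
    simp [Complex.ext_iff]
  rw [hc1, hc2]
  simp only [← Complex.ofReal_inv, ← Complex.ofReal_mul, ← Complex.ofReal_add,
    ← Complex.ofReal_neg, ← Complex.ofReal_pow, ← Complex.ofReal_ofNat]
  rw [Complex.ext_iff]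
  constructor <;>
  · simp only [Complex.add_re, Complex.add_im, Complex.mul_re, Complex.mul_im,
      Complex.sub_re, Complex.sub_im, Complex.neg_re, Complex.neg_im,
      Complex.ofReal_re, Complex.ofReal_im, Complex.I_re, Complex.I_im,
      Complex.one_re, Complex.one_im, Complex.div_re, Complex.div_im,
      Complex.normSq_apply, Complex.zero_re, Complex.zero_im, Complex.conj_I]
    field_simp
    ring
end

section
/- Let a : ℝ → Matrix (Fin 2) (Fin 2) ℂ be a curve whose entries are differentiable at t₀, with det (a t) = 1 for all t. Let z ∈ ℂ with (a t₀) 1 0 * z + (a t₀) 1 1 ≠ 0, and set A := (a t₀)⁻¹ * a', where a' is the entrywise derivative of a at t₀ (a' i j = deriv (fun t => a t i j) t₀). Then ((a t₀) 1 0 * z + (a t₀) 1 1)² * deriv (fun t => ((a t) 0 0 * z + (a t) 0 1)/((a t) 1 0 * z + (a t) 1 1)) t₀ = A 0 1 + (A 0 0 − A 1 1) * z − A 1 0 * z². -/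
/-- Differentiating a family of Möbius transformations given by a curve `a` in
`SL(2,ℂ)` at a fixed point `z`: with `A = a⁻¹ a'` the connection matrix, one has
`(a₂₁ z + a₂₂)² dz̃ = A₁₂ + (A₁₁ - A₂₂) z - A₂₁ z²`. -/
theorem moebius_family_deriv
    (a : ℝ → Matrix (Fin 2) (Fin 2) ℂ) (t₀ : ℝ)
    (hdiff : ∀ i j, DifferentiableAt ℝ (fun t => a t i j) t₀)
    (hdet : ∀ t, (a t).det = 1)
    (z : ℂ) (hz : (a t₀) 1 0 * z + (a t₀) 1 1 ≠ 0)
    (a' : Matrix (Fin 2) (Fin 2) ℂ)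
    (ha' : ∀ i j, a' i j = deriv (fun t => a t i j) t₀)
    (A : Matrix (Fin 2) (Fin 2) ℂ) (hA : A = (a t₀)⁻¹ * a') :
    ((a t₀) 1 0 * z + (a t₀) 1 1) ^ 2 *
        deriv (fun t => ((a t) 0 0 * z + (a t) 0 1) / ((a t) 1 0 * z + (a t) 1 1)) t₀
      = A 0 1 + (A 0 0 - A 1 1) * z - A 1 0 * z ^ 2 := by
  have hN : DifferentiableAt ℝ (fun t => (a t) 0 0 * z + (a t) 0 1) t₀ :=
    ((hdiff 0 0).mul_const z).add (hdiff 0 1)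
  have hD : DifferentiableAt ℝ (fun t => (a t) 1 0 * z + (a t) 1 1) t₀ :=
    ((hdiff 1 0).mul_const z).add (hdiff 1 1)
  have hderiv := deriv_fun_div hN hD hz
  have hN' : deriv (fun t => (a t) 0 0 * z + (a t) 0 1) t₀ = a' 0 0 * z + a' 0 1 := by
    rw [deriv_fun_add ((hdiff 0 0).mul_const z) (hdiff 0 1), deriv_mul_const (hdiff 0 0) z,
      ha' 0 0, ha' 0 1]
  have hD' : deriv (fun t => (a t) 1 0 * z + (a t) 1 1) t₀ = a' 1 0 * z + a' 1 1 := by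
    rw [deriv_fun_add ((hdiff 1 0).mul_const z) (hdiff 1 1), deriv_mul_const (hdiff 1 0) z,
      ha' 1 0, ha' 1 1]
  rw [hderiv, hN', hD']
  have hdet0 := hdet t₀
  have hAe : ∀ i j, A i j = ((a t₀)⁻¹ * a') i j := fun i j => by rw [hA]
  have hinv : (a t₀)⁻¹ = (a t₀).adjugate := by
    rw [Matrix.inv_def, hdet0]; simp
  have e01 := hAe 0 1
  have e00 := hAe 0 0
  have e11 := hAe 1 1
  have e10 := hAe 1 0
  simp only [hinv, Matrix.adjugate_fin_two, Matrix.mul_apply, Fin.sum_univ_two,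
    Matrix.of_apply, Matrix.cons_val', Matrix.cons_val_zero, Matrix.cons_val_one,
    Matrix.head_cons, Matrix.head_fin_const, Matrix.empty_val',
    Matrix.cons_val_fin_one] at e01 e00 e11 e10
  rw [e01, e00, e11, e10]
  have hdetexp : (a t₀) 0 0 * (a t₀) 1 1 - (a t₀) 0 1 * (a t₀) 1 0 = 1 := by
    rw [← hdet0, Matrix.det_fin_two]
  field_simp
  ring
end
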